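/- If x̄ ∈ X with κ(x̄) < +∞, ȳ ∈ X' with κ°(ȳ) < +∞, and κ(x̄)·κ°(ȳ) = 1, then x̄ is optimal for min{κ(x) : x ∈ X} and ȳ is optimal for min{κ°(y) : y ∈ X'}. -/
import Mathlib


open scoped RealInnerProductSpace

/-- A gauge function on ℝⁿ: nonnegative, convex, positively homogeneous, vanishing at 0. -/
def IsGauge {n : ℕ} (κ : EuclideanSpace ℝ (Fin n) → EReal) : Prop :=
  (∀ x, 0 ≤ κ x) ∧
  (∀ x y : EuclideanSpace ℝ (Fin n), ∀ a b : ℝ, 0 ≤ a → 0 ≤ b → a + b = 1 →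
    κ (a • x + b • y) ≤ (a : EReal) * κ x + (b : EReal) * κ y) ∧
  (∀ (c : ℝ) (x : EuclideanSpace ℝ (Fin n)), 0 < c → κ (c • x) = (c : EReal) * κ x) ∧
  κ 0 = 0

/-- The polar of a gauge: κ°(y) = inf {μ > 0 : ⟨x,y⟩ ≤ μ κ(x) for all x}. -/
noncomputable def gaugePolar {n : ℕ} (κ : EuclideanSpace ℝ (Fin n) → EReal)
    (y : EuclideanSpace ℝ (Fin n)) : EReal :=
  sInf {t : EReal | ∃ μ : ℝ, 0 < μ ∧ t = (μ : EReal) ∧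
    ∀ x : EuclideanSpace ℝ (Fin n), ((⟪x, y⟫ : ℝ) : EReal) ≤ (μ : EReal) * κ x}

/-- The antipolar of a set X ⊆ ℝⁿ: X' = {y : ⟨x,y⟩ ≥ 1 for all x ∈ X}. -/
def antipolar {n : ℕ} (X : Set (EuclideanSpace ℝ (Fin n))) : Set (EuclideanSpace ℝ (Fin n)) :=
  {y | ∀ x ∈ X, 1 ≤ (⟪x, y⟫ : ℝ)}

/-- Sufficient optimality: feasible points with κ(x̄)·κ°(ȳ) = 1 are optimal. -/
theorem gauge_optimality_sufficient {n : ℕ} (κ : EuclideanSpace ℝ (Fin n) → EReal)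
    (hκ : IsGauge κ) (X : Set (EuclideanSpace ℝ (Fin n)))
    (hXc : IsClosed X) (hXconv : Convex ℝ X)
    (xbar ybar : EuclideanSpace ℝ (Fin n))
    (hx : xbar ∈ X) (hxfin : κ xbar ≠ ⊤)
    (hy : ybar ∈ antipolar X) (hyfin : gaugePolar κ ybar ≠ ⊤)
    (hprod : κ xbar * gaugePolar κ ybar = 1) :
    (∀ x ∈ X, κ xbar ≤ κ x) ∧ (∀ y ∈ antipolar X, gaugePolar κ ybar ≤ gaugePolar κ y) := by
  obtain ⟨hnn, -, -, -⟩ := hκ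
  -- κ xbar is a nonneg real number a
  have hxbot : κ xbar ≠ ⊥ := fun h => by simpa [h] using hnn xbar
  lift κ xbar to ℝ using ⟨hxfin, hxbot⟩ with a ha
  -- gaugePolar κ ybar is a nonneg real number b
  have hybot0 : (0 : EReal) ≤ gaugePolar κ ybar := by
    apply le_sInf
    rintro t ⟨μ, hμ, rfl, -⟩
    exact_mod_cast hμ.le
  have hybot : gaugePolar κ ybar ≠ ⊥ := fun h => by simpa [h] using hybot0
  lift gaugePolar κ ybar to ℝ using ⟨hyfin, hybot⟩ with b hb
  have hab : a * b = 1 := by exact_mod_cast hprod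
  have ha0 : 0 ≤ a := by exact_mod_cast ha ▸ hnn xbar
  have hapos : 0 < a := by
    rcases ha0.lt_or_eq with h | h
    · exact h
    · simp [← h] at hab
  have hbpos : 0 < b := by nlinarith
  constructor
  · intro x hxX
    rcases eq_or_ne (κ x) ⊤ with h | h
    · simp [h]
    have hxb : κ x ≠ ⊥ := fun h' => by simpa [h'] using hnn x
    lift κ x to ℝ using ⟨h, hxb⟩ with r hr
    -- for every μ in the defining set, 1 ≤ μ * r
    have key : ∀ μ : ℝ, 0 < μ →
        (∀ z : EuclideanSpace ℝ (Fin n), ((⟪z, ybar⟫ : ℝ) : EReal) ≤ (μ : EReal) * κ z) →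
        1 ≤ μ * r := by
      intro μ hμ hall
      have h1 : (1 : ℝ) ≤ ⟪x, ybar⟫ := hy x hxX
      have h2 : ((⟪x, ybar⟫ : ℝ) : EReal) ≤ ((μ * r : ℝ) : EReal) := by
        have := hall x
        rw [← hr] at this
        exact this.trans_eq (by rw [EReal.coe_mul])
      have : (⟪x, ybar⟫ : ℝ) ≤ μ * r := by exact_mod_cast h2
      linarith
    have hrpos : 0 < r := by
      by_contra hrp
      push_neg at hrp
      -- the set is nonempty since gaugePolar ≠ ⊤
      have hne : {t : EReal | ∃ μ : ℝ, 0 < μ ∧ t = (μ : EReal) ∧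
          ∀ z : EuclideanSpace ℝ (Fin n), ((⟪z, ybar⟫ : ℝ) : EReal) ≤ (μ : EReal) * κ z}.Nonempty := by
        by_contra hne
        rw [Set.not_nonempty_iff_eq_empty] at hne
        rw [gaugePolar, hne] at hb
        simp at hb
      obtain ⟨t, μ, hμ, rfl, hall⟩ := hne
      have := key μ hμ hall
      nlinarith
    -- b ≥ 1/r
    have hbr : ((1 / r : ℝ) : EReal) ≤ (b : EReal) := by
      rw [hb, gaugePolar]
      apply le_sInf
      rintro t ⟨μ, hμ, rfl, hall⟩
      have := key μ hμ hall
      have : 1 / r ≤ μ := by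
        rw [div_le_iff₀ hrpos]
        linarith [key μ hμ hall]
      exact_mod_cast this
    have hbr' : 1 / r ≤ b := by exact_mod_cast hbr
    have : a ≤ r := by
      rw [div_le_iff₀ hrpos] at hbr'
      have : a * 1 ≤ a * (b * r) := by nlinarith
      rw [← mul_assoc, hab] at this
      linarith
    exact_mod_cast this
  · intro y hyX
    rw [gaugePolar]
    apply le_sInf
    rintro t ⟨μ, hμ, rfl, hall⟩
    have h1 : (1 : ℝ) ≤ ⟪xbar, y⟫ := hyX xbar hx
    have h2 : ((⟪xbar, y⟫ : ℝ) : EReal) ≤ ((μ * a : ℝ) : EReal) := by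
      have := hall xbar
      rw [← ha] at this
      exact this.trans_eq (by rw [EReal.coe_mul])
    have h3 : (⟪xbar, y⟫ : ℝ) ≤ μ * a := by exact_mod_cast h2
    have : b ≤ μ := by
      have : 1 ≤ μ * a := le_trans h1 h3
      nlinarith
    exact_mod_cast this
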